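/- arXiv:1607.01966 — 6 statements merged into one kernel-verified Lean document; each statement's English description precedes it below -/
import Mathlib

section
/- Let c₁, …, cₙ be pairwise distinct real constants, let u₁, …, uₙ be nonzero real numbers, and let λ be a real number distinct from each cᵢ. Define pᵢ = uᵢ/(λ−cᵢ). Then for every triple of distinct indices (i, j, k), the quadric relation (cᵢ−cⱼ)·u_k·pᵢpⱼ + (cⱼ−c_k)·uᵢ·pⱼp_k + (c_k−cᵢ)·uⱼ·pᵢp_k = 0 holds. -/
/-- The parametrization `pᵢ = uᵢ/(λ−cᵢ)` of the rational normal curve lies on the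
quadrics of the characteristic variety of the Veronese web hierarchy. -/
theorem veronese_char_variety_param (n : ℕ) (c u : Fin n → ℝ)
    (hc : Function.Injective c) (hu : ∀ i, u i ≠ 0) (lam : ℝ)
    (hlam : ∀ i, lam ≠ c i) (p : Fin n → ℝ) (hp : ∀ i, p i = u i / (lam - c i))
    (i j k : Fin n) (hij : i ≠ j) (hjk : j ≠ k) (hik : i ≠ k) :
    (c i - c j) * u k * (p i * p j) + (c j - c k) * u i * (p j * p k)
      + (c k - c i) * u j * (p i * p k) = 0 := by
  have hi : lam - c i ≠ 0 := sub_ne_zero.mpr (hlam i)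
  have hj : lam - c j ≠ 0 := sub_ne_zero.mpr (hlam j)
  have hk : lam - c k ≠ 0 := sub_ne_zero.mpr (hlam k)
  rw [hp i, hp j, hp k]
  field_simp
  ring
end

section
/- Let u : ℝ³ → ℝ be smooth with coordinates (x, y, t), and for λ ∈ ℝ define the vector fields X = ∂_y − (λ − u_x)∂_x and Y = ∂_t − (λ² − u_x λ − u_y)∂_x on ℝ³ (λ a fixed parameter). Then [X, Y] = q(λ)·∂_x where q(λ) is a polynomial in λ whose coefficients are built from u, and [X, Y] = 0 for all λ if and only if u satisfies the first equation of the universal hierarchy: u_xt − u_yy + u_y u_xx − u_x u_xy = 0. -/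
/-- Partial derivative of a function on `ℝ³`. -/
noncomputable def pd (u : (Fin 3 → ℝ) → ℝ) (i : Fin 3) (x : Fin 3 → ℝ) : ℝ :=
  fderiv ℝ u x (Pi.single i 1)

/-- Lie bracket of vector fields on `ℝ³`. -/
noncomputable def bracket (X Y : (Fin 3 → ℝ) → (Fin 3 → ℝ)) (p : Fin 3 → ℝ) : Fin 3 → ℝ :=
  fderiv ℝ Y p (X p) - fderiv ℝ X p (Y p)

lemma pd_contDiff {u : (Fin 3 → ℝ) → ℝ} (hu : ContDiff ℝ (⊤ : ℕ∞) u) (i : Fin 3) :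
    ContDiff ℝ (⊤ : ℕ∞) (pd u i) := by
  have : ContDiff ℝ (⊤ : ℕ∞) (fderiv ℝ u) := hu.fderiv_right (by simp)
  exact this.clm_apply contDiff_const

lemma fderiv_expand (f : (Fin 3 → ℝ) → ℝ) (p v : Fin 3 → ℝ) :
    fderiv ℝ f p v = v 0 * pd f 0 p + v 1 * pd f 1 p + v 2 * pd f 2 p := by
  have hv : v = v 0 • (Pi.single 0 1 : Fin 3 → ℝ) + v 1 • (Pi.single 1 1 : Fin 3 → ℝ)
      + v 2 • (Pi.single 2 1 : Fin 3 → ℝ) := by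
    funext j; fin_cases j <;> simp
  conv_lhs => rw [hv]
  simp [pd, mul_comm]

lemma fderiv_field {f : (Fin 3 → ℝ) → ℝ} {p : Fin 3 → ℝ}
    (hf : DifferentiableAt ℝ f p) (c1 c2 : ℝ) (v : Fin 3 → ℝ) :
    fderiv ℝ (fun q => ![f q, c1, c2]) p v = ![fderiv ℝ f p v, 0, 0] := by
  have h : (fun q => ![f q, c1, c2])
      = fun q (i : Fin 3) => (![f, fun _ => c1, fun _ => c2] : Fin 3 → _) i q := by
    funext q i; fin_cases i <;> rfl
  rw [h, fderiv_pi]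
  · funext i; fin_cases i <;> simp [ContinuousLinearMap.pi_apply]
  · intro i; fin_cases i
    · exact hf
    · exact differentiableAt_const _
    · exact differentiableAt_const _

lemma pd_symm {u : (Fin 3 → ℝ) → ℝ} (hu : ContDiff ℝ (⊤ : ℕ∞) u) (i j : Fin 3) (p : Fin 3 → ℝ) :
    pd (pd u i) j p = pd (pd u j) i p := by
  have hd : DifferentiableAt ℝ (fderiv ℝ u) p :=
    ((hu.fderiv_right (m := (⊤ : ℕ∞)) (by simp)).differentiable (by simp)).differentiableAt
  have key : ∀ k l : Fin 3,
      pd (pd u k) l p = fderiv ℝ (fderiv ℝ u) p (Pi.single l 1) (Pi.single k 1) := by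
    intro k l
    unfold pd
    rw [fderiv_clm_apply hd (differentiableAt_const _)]
    simp
  have hsym : IsSymmSndFDerivAt ℝ u p :=
    hu.contDiffAt.isSymmSndFDerivAt (by rw [minSmoothness_of_isRCLikeNormedField]; exact WithTop.coe_le_coe.mpr (le_top : (2 : ℕ∞) ≤ ⊤))
  rw [key, key, hsym]

/-- Lax representation of the first equation of the universal hierarchy: for the
λ-dependent vector fields `X = ∂_y − (λ − u_x)∂_x` and
`Y = ∂_t − (λ² − u_xλ − u_y)∂_x` on `ℝ³` (coordinates `x,y,t` with indices `0,1,2`),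
the bracket `[X,Y]` lies in the span of `∂_x`, and it vanishes for all `λ` if and
only if `u_xt − u_yy + u_y u_xx − u_x u_xy = 0` holds identically. -/
theorem universal_hierarchy_lax (u : (Fin 3 → ℝ) → ℝ) (hu : ContDiff ℝ (⊤ : ℕ∞) u)
    (X Y : ℝ → (Fin 3 → ℝ) → (Fin 3 → ℝ))
    (hX : ∀ lam p, X lam p = ![-(lam - pd u 0 p), 1, 0])
    (hY : ∀ lam p, Y lam p = ![-(lam ^ 2 - pd u 0 p * lam - pd u 1 p), 0, 1]) :
    (∀ lam p, ∀ i : Fin 3, i ≠ 0 → bracket (X lam) (Y lam) p i = 0) ∧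
    ((∀ lam p, bracket (X lam) (Y lam) p = 0) ↔
      (∀ p, pd (pd u 0) 2 p - pd (pd u 1) 1 p
        + pd u 1 p * pd (pd u 0) 0 p - pd u 0 p * pd (pd u 0) 1 p = 0)) := by
  have hg0 : ContDiff ℝ (⊤ : ℕ∞) (pd u 0) := pd_contDiff hu 0
  have hg1 : ContDiff ℝ (⊤ : ℕ∞) (pd u 1) := pd_contDiff hu 1
  have key : ∀ lam p, bracket (X lam) (Y lam) p
      = ![-(pd (pd u 0) 2 p - pd (pd u 1) 1 p
        + pd u 1 p * pd (pd u 0) 0 p - pd u 0 p * pd (pd u 0) 1 p), 0, 0] := by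
    intro lam p
    have hd0 : DifferentiableAt ℝ (pd u 0) p := (hg0.differentiable (by simp)).differentiableAt
    have hd1 : DifferentiableAt ℝ (pd u 1) p := (hg1.differentiable (by simp)).differentiableAt
    have hXf : X lam = fun q => ![-(lam - pd u 0 q), 1, 0] := funext (hX lam)
    have hYf : Y lam = fun q => ![-(lam ^ 2 - pd u 0 q * lam - pd u 1 q), 0, 1] :=
      funext (hY lam)
    -- derivative of the first component of X
    have hfX : ∀ v, fderiv ℝ (fun q => -(lam - pd u 0 q)) p v = fderiv ℝ (pd u 0) p v := by
      intro v
      have : (fun q => -(lam - pd u 0 q)) = fun q => pd u 0 q + (-lam) := by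
        funext q; ring
      rw [this, fderiv_add_const]
    -- derivative of the first component of Y
    have hfY : ∀ v, fderiv ℝ (fun q => -(lam ^ 2 - pd u 0 q * lam - pd u 1 q)) p v
        = fderiv ℝ (pd u 0) p v * lam + fderiv ℝ (pd u 1) p v := by
      intro v
      have : (fun q => -(lam ^ 2 - pd u 0 q * lam - pd u 1 q))
          = fun q => (pd u 0 q * lam + pd u 1 q) + (-(lam ^ 2)) := by
        funext q; ring
      rw [this, fderiv_add_const, fderiv_fun_add (hd0.mul_const lam) hd1,
        fderiv_mul_const hd0]
      simp
      ring
    have hdX : DifferentiableAt ℝ (fun q => -(lam - pd u 0 q)) p := by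
      have : (fun q => -(lam - pd u 0 q)) = fun q => pd u 0 q + (-lam) := by
        funext q; ring
      rw [this]; exact hd0.add_const _
    have hdY : DifferentiableAt ℝ (fun q => -(lam ^ 2 - pd u 0 q * lam - pd u 1 q)) p := by
      have : (fun q => -(lam ^ 2 - pd u 0 q * lam - pd u 1 q))
          = fun q => (pd u 0 q * lam + pd u 1 q) + (-(lam ^ 2)) := by
        funext q; ring
      rw [this]; exact ((hd0.mul_const lam).add hd1).add_const _
    unfold bracket
    rw [hXf, hYf, fderiv_field hdX 1 0, fderiv_field hdY 0 1]
    funext i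
    fin_cases i
    · simp only [Fin.mk_zero, Pi.sub_apply, Matrix.cons_val_zero]
      rw [hfX, hfY, fderiv_expand (pd u 0), fderiv_expand (pd u 0), fderiv_expand (pd u 1)]
      have hs : pd (pd u 1) 0 p = pd (pd u 0) 1 p := pd_symm hu 1 0 p
      simp only [Matrix.cons_val_zero, Matrix.cons_val_one, Matrix.head_cons,
        Matrix.cons_val_two, Matrix.tail_cons]
      rw [hs]
      ring
    · simp
    · simp
  refine ⟨?_, ?_, ?_⟩
  · intro lam p i hi
    rw [key]
    fin_cases i
    · exact absurd rfl hi
    · simp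
    · simp
  · intro h p
    have h0 := congrFun (h 0 p) 0
    rw [key] at h0
    simp only [Matrix.cons_val_zero, Pi.zero_apply] at h0
    linarith
  · intro h lam p
    rw [key]
    funext i
    fin_cases i <;> simp [h p]
end

section
/- Let n ≥ 4, let a₁, …, aₙ be pairwise distinct real numbers, and let S = (S_{ij}) be a symmetric array of real numbers (i ≠ j). For pairwise distinct indices i, j, k, l define E_{ijkl}(S) = 𝔖_{(jkl)} (aᵢ−aⱼ)(a_k−a_l)(S_{ij} + S_{kl}), the cyclic sum over (j,k,l). Then for pairwise distinct indices i, j, k, l all different from 1 and 2, the identity (a₁−a₂)·E_{ijkl} = (a_k−a_l)E_{12ij} + (a_j−a_l)E_{12ki} + (a_j−a_k)E_{12il} + (a_i−a_l)E_{12jk} + (a_i−a_k)E_{12lj} + (a_i−a_j)E_{12kl} holds. -/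
/-- The cyclic expression `E_{ijkl} = 𝔖_{(jkl)} (aᵢ−aⱼ)(a_k−a_l)(S_{ij} + S_{kl})`. -/
def Ecyc {n : ℕ} (a : Fin n → ℝ) (S : Fin n → Fin n → ℝ) (i j k l : Fin n) : ℝ :=
  (a i - a j) * (a k - a l) * (S i j + S k l)
    + (a i - a k) * (a l - a j) * (S i k + S l j)
    + (a i - a l) * (a j - a k) * (S i l + S j k)

/-- Linear dependence among the Wünschmann-type equations: every `E_{ijkl}` is a
linear combination of the `E_{12··}`'s (here the indices `1, 2` are represented by
`⟨0,_⟩` and `⟨1,_⟩`). -/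
theorem E_linear_dependence (n : ℕ) (hn : 4 ≤ n) (a : Fin n → ℝ)
    (ha : Function.Injective a) (S : Fin n → Fin n → ℝ) (hS : ∀ i j, S i j = S j i)
    (i j k l : Fin n)
    (hij : i ≠ j) (hik : i ≠ k) (hil : i ≠ l) (hjk : j ≠ k) (hjl : j ≠ l) (hkl : k ≠ l)
    (hi1 : i ≠ ⟨0, by omega⟩) (hi2 : i ≠ ⟨1, by omega⟩)
    (hj1 : j ≠ ⟨0, by omega⟩) (hj2 : j ≠ ⟨1, by omega⟩)
    (hk1 : k ≠ ⟨0, by omega⟩) (hk2 : k ≠ ⟨1, by omega⟩)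
    (hl1 : l ≠ ⟨0, by omega⟩) (hl2 : l ≠ ⟨1, by omega⟩) :
    (a ⟨0, by omega⟩ - a ⟨1, by omega⟩) * Ecyc a S i j k l =
      (a k - a l) * Ecyc a S ⟨0, by omega⟩ ⟨1, by omega⟩ i j
      + (a j - a l) * Ecyc a S ⟨0, by omega⟩ ⟨1, by omega⟩ k i
      + (a j - a k) * Ecyc a S ⟨0, by omega⟩ ⟨1, by omega⟩ i l
      + (a i - a l) * Ecyc a S ⟨0, by omega⟩ ⟨1, by omega⟩ j k
      + (a i - a k) * Ecyc a S ⟨0, by omega⟩ ⟨1, by omega⟩ l j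
      + (a i - a j) * Ecyc a S ⟨0, by omega⟩ ⟨1, by omega⟩ k l := by
  set o : Fin n := ⟨0, by omega⟩
  set t : Fin n := ⟨1, by omega⟩
  simp only [Ecyc, hS i t, hS j t, hS k t, hS l t, hS k i, hS l j]
  ring
end

section
/- Let a₁, …, aₙ be pairwise distinct reals, u₁, …, uₙ nonzero reals, λ ∈ ℝ distinct from every aᵢ, and set pᵢ = uᵢ/(λ − aᵢ). Then for all pairwise distinct indices i, j, k, l, the cyclic sum 𝔖_{(jkl)} (aᵢ−aⱼ)(a_k−a_l)·( pᵢpⱼ/(uᵢuⱼ) + p_k p_l/(u_k u_l) ) equals zero. -/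
/-- Vanishing of the u-linearized symbol of the system governing involutive
GL(2,ℝ) structures on the rational normal curve `pᵢ = uᵢ/(λ−aᵢ)`:
`𝔖_{(jkl)} (aᵢ−aⱼ)(a_k−a_l)(pᵢpⱼ/(uᵢuⱼ) + p_kp_l/(u_ku_l)) = 0`. -/
theorem symbol_vanishes_on_rnc (n : ℕ) (a u : Fin n → ℝ)
    (ha : Function.Injective a) (hu : ∀ i, u i ≠ 0) (lam : ℝ)
    (hlam : ∀ i, lam ≠ a i) (p : Fin n → ℝ) (hp : ∀ i, p i = u i / (lam - a i))
    (i j k l : Fin n)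
    (hij : i ≠ j) (hik : i ≠ k) (hil : i ≠ l) (hjk : j ≠ k) (hjl : j ≠ l) (hkl : k ≠ l) :
    (a i - a j) * (a k - a l) * (p i * p j / (u i * u j) + p k * p l / (u k * u l))
      + (a i - a k) * (a l - a j) * (p i * p k / (u i * u k) + p l * p j / (u l * u j))
      + (a i - a l) * (a j - a k) * (p i * p l / (u i * u l) + p j * p k / (u j * u k))
      = 0 := by
  have hla : ∀ m : Fin n, lam - a m ≠ 0 := fun m => sub_ne_zero.mpr (hlam m)
  have key : ∀ m m' : Fin n, p m * p m' / (u m * u m')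
      = 1 / ((lam - a m) * (lam - a m')) := by
    intro m m'
    rw [hp, hp, div_mul_div_comm, div_div, mul_comm ((lam - a m) * (lam - a m')),
      ← div_div, div_self (mul_ne_zero (hu m) (hu m'))]
  have hd : ∀ m m' : Fin n, a m - a m' = (lam - a m') - (lam - a m) := by
    intro m m'; ring
  rw [key, key, key, key, key, key, hd i j, hd k l, hd i k, hd l j, hd i l, hd j k]
  have hi := hla i; have hj := hla j; have hk := hla k; have hl := hla l
  generalize lam - a i = x at *
  generalize lam - a j = y at *
  generalize lam - a k = z at *
  generalize lam - a l = w at *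
  field_simp
  ring
end

section
/- Let a₁, …, aₙ be pairwise distinct reals, u₁, …, uₙ nonzero reals, λ, μ ∈ ℝ with λ distinct from every aᵢ, and set pᵢ = uᵢ/(λ−aᵢ) + uᵢμ/(λ−aᵢ)². Then for distinct i,j,k,l the identity λ·𝔖_{(jkl)}(aᵢ−aⱼ)(a_k−a_l)(pᵢpⱼ/(uᵢuⱼ)+p_kp_l/(u_ku_l)) = 𝔖_{(jkl)}(aᵢ−aⱼ)(a_k−a_l)·(½(aᵢ+aⱼ)pᵢpⱼ/(uᵢuⱼ) + ½(a_k+a_l)p_kp_l/(u_ku_l)) holds. -/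
set_option maxHeartbeats 1000000



private lemma tangential_aux (x y z w mu : ℝ) (hx : x ≠ 0) (hy : y ≠ 0)
    (hz : z ≠ 0) (hw : w ≠ 0) :
    (y - x) * (w - z) * ((x + y) / 2 * ((x + mu) * (y + mu) / (x ^ 2 * y ^ 2))
        + (z + w) / 2 * ((z + mu) * (w + mu) / (z ^ 2 * w ^ 2)))
    + (z - x) * (y - w) * ((x + z) / 2 * ((x + mu) * (z + mu) / (x ^ 2 * z ^ 2))
        + (w + y) / 2 * ((w + mu) * (y + mu) / (w ^ 2 * y ^ 2)))
    + (w - x) * (z - y) * ((x + w) / 2 * ((x + mu) * (w + mu) / (x ^ 2 * w ^ 2))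
        + (y + z) / 2 * ((y + mu) * (z + mu) / (y ^ 2 * z ^ 2))) = 0 := by
  field_simp
  ring

/-- On the tangential variety of the rational normal curve, parametrized by
`pᵢ = uᵢ/(λ−aᵢ) + uᵢμ/(λ−aᵢ)²`, the u-symbol and v-symbol of the governing system
are proportional: `λ·𝔖_{(jkl)} (aᵢ−aⱼ)(a_k−a_l)(pᵢpⱼ/(uᵢuⱼ)+p_kp_l/(u_ku_l)) =
𝔖_{(jkl)} (aᵢ−aⱼ)(a_k−a_l)(½(aᵢ+aⱼ)pᵢpⱼ/(uᵢuⱼ) + ½(a_k+a_l)p_kp_l/(u_ku_l))`. -/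
theorem symbol_proportional_on_tangential (n : ℕ) (a u : Fin n → ℝ)
    (ha : Function.Injective a) (hu : ∀ i, u i ≠ 0) (lam mu : ℝ)
    (hlam : ∀ i, lam ≠ a i) (p : Fin n → ℝ)
    (hp : ∀ i, p i = u i / (lam - a i) + u i * mu / (lam - a i) ^ 2)
    (i j k l : Fin n)
    (hij : i ≠ j) (hik : i ≠ k) (hil : i ≠ l) (hjk : j ≠ k) (hjl : j ≠ l) (hkl : k ≠ l) :
    lam * ((a i - a j) * (a k - a l) * (p i * p j / (u i * u j) + p k * p l / (u k * u l))
      + (a i - a k) * (a l - a j) * (p i * p k / (u i * u k) + p l * p j / (u l * u j))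
      + (a i - a l) * (a j - a k) * (p i * p l / (u i * u l) + p j * p k / (u j * u k)))
    = (a i - a j) * (a k - a l)
        * ((a i + a j) / 2 * (p i * p j / (u i * u j)) + (a k + a l) / 2 * (p k * p l / (u k * u l)))
      + (a i - a k) * (a l - a j)
        * ((a i + a k) / 2 * (p i * p k / (u i * u k)) + (a l + a j) / 2 * (p l * p j / (u l * u j)))
      + (a i - a l) * (a j - a k)
        * ((a i + a l) / 2 * (p i * p l / (u i * u l)) + (a j + a k) / 2 * (p j * p k / (u j * u k))) := by
  have hd : ∀ m, lam - a m ≠ 0 := fun m => sub_ne_zero.2 (hlam m)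
  have key : ∀ m r : Fin n, p m * p r / (u m * u r)
      = ((lam - a m) + mu) * ((lam - a r) + mu) / ((lam - a m) ^ 2 * (lam - a r) ^ 2) := by
    intro m r
    have h1 := hd m; have h2 := hd r; have h3 := hu m; have h4 := hu r
    rw [hp m, hp r]
    field_simp
  rw [key i j, key k l, key i k, key l j, key i l, key j k]
  have hx : a i = lam - (lam - a i) := by ring
  have hy : a j = lam - (lam - a j) := by ring
  have hz : a k = lam - (lam - a k) := by ring
  have hw : a l = lam - (lam - a l) := by ring
  have H := tangential_aux (lam - a i) (lam - a j) (lam - a k) (lam - a l) mu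
    (hd i) (hd j) (hd k) (hd l)
  linear_combination H
end

section
/- Let a₁, a₂, a₃, a₄ be pairwise distinct reals, λ distinct from all aᵢ, and u₁,…,u₄ nonzero reals. For a collection of reals (λᵢ)ᵢ and symmetric arrays u_{ij}, v_{ij}, define T_{ijk} as in equation (lam) of the paper: T_{ijk} = ((λ−aᵢ)/uᵢ)(1/(λ−a_k) − 1/(λ−aⱼ))λᵢ + ((λ−aⱼ)/uⱼ)(1/(λ−aᵢ) − 1/(λ−a_k))λⱼ + ((λ−a_k)/u_k)(1/(λ−aⱼ) − 1/(λ−aᵢ))λ_k + S_{ijk}, where S_{ijk} is the stated expression in u_{··}, v_{··}, a_·, u_·, λ. Then the combination T_{ikj} + T_{ijl} + T_{ilk} + T_{jkl} vanishes identically (in particular the λᵢ-terms cancel). -/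
/-- The quantity `S_{ijk}` from equation (lam) of the paper. -/
noncomputable def SS {n : ℕ} (lam : ℝ) (a u : Fin n → ℝ)
    (U V : Fin n → Fin n → ℝ) (i j k : Fin n) : ℝ :=
  U i j * ((a j - a i) / (u i * u j)) * (lam / (lam - a i) + lam / (lam - a j))
    + U i k * ((a i - a k) / (u i * u k)) * (lam / (lam - a i) + lam / (lam - a k))
    + U j k * ((a k - a j) / (u j * u k)) * (lam / (lam - a j) + lam / (lam - a k))
    - V i j * ((a j - a i) / (u i * u j))
        * (lam * a i / (lam - a i) + lam * a j / (lam - a j))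
    - V i k * ((a i - a k) / (u i * u k))
        * (lam * a i / (lam - a i) + lam * a k / (lam - a k))
    - V j k * ((a k - a j) / (u j * u k))
        * (lam * a j / (lam - a j) + lam * a k / (lam - a k))

/-- The quantity `T_{ijk}` from equation (lam) of the paper; `ld i` plays the role of
the derivative `λᵢ`. -/
noncomputable def TT {n : ℕ} (lam : ℝ) (a u ld : Fin n → ℝ)
    (U V : Fin n → Fin n → ℝ) (i j k : Fin n) : ℝ :=
  ((lam - a i) / u i) * (1 / (lam - a k) - 1 / (lam - a j)) * ld i
    + ((lam - a j) / u j) * (1 / (lam - a i) - 1 / (lam - a k)) * ld j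
    + ((lam - a k) / u k) * (1 / (lam - a j) - 1 / (lam - a i)) * ld k
    + SS lam a u U V i j k

/-- The combination `T_{ikj} + T_{ijl} + T_{ilk} + T_{jkl}` vanishes identically;
in particular all the `λᵢ`-terms cancel. -/
theorem T_combination_vanishes (n : ℕ) (lam : ℝ) (a u ld : Fin n → ℝ)
    (ha : Function.Injective a) (hu : ∀ i, u i ≠ 0) (hlam : ∀ i, lam ≠ a i)
    (U V : Fin n → Fin n → ℝ) (hU : ∀ i j, U i j = U j i) (hV : ∀ i j, V i j = V j i)
    (i j k l : Fin n)
    (hij : i ≠ j) (hik : i ≠ k) (hil : i ≠ l) (hjk : j ≠ k) (hjl : j ≠ l) (hkl : k ≠ l) :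
    TT lam a u ld U V i k j + TT lam a u ld U V i j l
      + TT lam a u ld U V i l k + TT lam a u ld U V j k l = 0 := by
  have hli : lam - a i ≠ 0 := sub_ne_zero.mpr (hlam i)
  have hlj : lam - a j ≠ 0 := sub_ne_zero.mpr (hlam j)
  have hlk : lam - a k ≠ 0 := sub_ne_zero.mpr (hlam k)
  have hll : lam - a l ≠ 0 := sub_ne_zero.mpr (hlam l)
  simp only [TT, SS, hU k j, hV k j, hU l k, hV l k]
  simp only [div_eq_mul_inv, mul_inv, one_mul]
  ring
end
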